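/- arXiv:1401.4932 — 3 statements merged into one kernel-verified Lean document; each statement's English description precedes it below -/
import Mathlib

section
/- Let φ be a universally quantified disjunction of literals of the form s^{k} x ∈ X_j or s^{k} x ∉ X_j, with maximal shift κ. Then an infinite word α (encoding the sets X_j) satisfies ∀x φ(x) if and only if for every residue s ∈ {0, ..., κ-1}, every natural number congruent to s modulo κ satisfies the disjunction. Consequently the set of models of ∀x φ(x) is an intersection of κ many co-Büchi recognisable languages, hence co-Büchi recognisable. -/
structure Automaton (σ : Type) where
  Q : Type
  fin : Fintype Q
  Δ : Q → σ → Q → Prop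
  q0 : Q
  F : Set Q

def Automaton.IsRun {σ : Type} (A : Automaton σ) (α : ℕ → σ) (ρ : ℕ → A.Q) : Prop :=
  ρ 0 = A.q0 ∧ ∀ i, A.Δ (ρ i) (α i) (ρ (i + 1))

def Automaton.BuchiAccepts {σ : Type} (A : Automaton σ) (α : ℕ → σ) : Prop :=
  ∃ ρ, A.IsRun α ρ ∧ {i | ρ i ∈ A.F}.Infinite

def Automaton.CoBuchiAccepts {σ : Type} (A : Automaton σ) (α : ℕ → σ) : Prop :=
  ∃ ρ, A.IsRun α ρ ∧ {i | ρ i ∉ A.F}.Finite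

def BuchiRecognisable {σ : Type} (L : Set (ℕ → σ)) : Prop :=
  ∃ A : Automaton σ, L = {α | A.BuchiAccepts α}

def CoBuchiRecognisable {σ : Type} (L : Set (ℕ → σ)) : Prop :=
  ∃ A : Automaton σ, L = {α | A.CoBuchiAccepts α}

/-- `x` satisfies the disjunction `⋁ s^{k} x ∈ X_j ∨ ⋁ s^{k'} x ∉ X_{j'}`, where the
positive literals are listed in `pos` and the negative ones in `neg`. -/
def SatDisj (m : ℕ) (pos neg : List (ℕ × Fin m)) (α : ℕ → (Fin m → Bool)) (x : ℕ) : Prop :=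
  (∃ p ∈ pos, α (x + p.1) p.2 = true) ∨ (∃ p ∈ neg, α (x + p.1) p.2 = false)

/-!
Satisfaction of `φ(x)` only depends on the window `α x, …, α (x + κ)`, so the models of
`∀x φ(x)` are the words all of whose windows of length `κ + 1` pass a fixed test, possibly
restricted to the positions of one residue class. A nondeterministic automaton recognises such a
safety language: after reading `α t` it guesses the window at `t` together with the residue of `t`,
checks that the window starts with `α t` and passes the test, and that it is the previous guess
shifted by one letter. By induction the guesses of any run are the true windows, and since every
state is accepting the co-Büchi condition holds for every run.
-/

open Set Fin.NatCast

theorem Automaton.coBuchiAccepts_iff_exists_isRun {σ : Type} (A : Automaton σ)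
    (hF : A.F = univ) (α : ℕ → σ) : A.CoBuchiAccepts α ↔ ∃ ρ, A.IsRun α ρ := by
  simp [Automaton.CoBuchiAccepts, hF]

namespace SlidingWindow

variable {σ : Type}

def window (k : ℕ) (α : ℕ → σ) (x : ℕ) : Fin (k + 1) → σ :=
  fun i => α (x + i)

variable (n k : ℕ) [NeZero n]

def Continues : Option (Fin n × (Fin (k + 1) → σ)) → Fin n × (Fin (k + 1) → σ) → Prop
  | none, (r, _) => r = 0
  | some (r₀, w₀), (r, w) => r = r₀ + 1 ∧ ∀ i : Fin k, w i.castSucc = w₀ i.succ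

variable [Fintype σ] (P : Fin n → (Fin (k + 1) → σ) → Prop)

def windowAutomaton : Automaton σ where
  Q := Option (Fin n × (Fin (k + 1) → σ))
  fin := inferInstance
  Δ p a q := ∃ r w, q = some (r, w) ∧ w 0 = a ∧ P r w ∧ Continues n k p (r, w)
  q0 := none
  F := univ

variable {n k}

def windowRun (α : ℕ → σ) : ℕ → Option (Fin n × (Fin (k + 1) → σ))
  | 0 => none
  | t + 1 => some ((t : Fin n), window k α t)

theorem isRun_windowRun {α : ℕ → σ} (hα : ∀ x : ℕ, P x (window k α x)) :
    (windowAutomaton n k P).IsRun α (windowRun α) := by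
  refine ⟨rfl, fun t => ⟨t, window k α t, rfl, by simp [window], hα t, ?_⟩⟩
  cases t with
  | zero => simp [windowRun, Continues]
  | succ t =>
    refine ⟨by push_cast; rfl, fun i => ?_⟩
    simp only [window, Fin.val_castSucc, Fin.val_succ]
    congr 1
    omega

theorem forall_window_of_isRun {α : ℕ → σ} {ρ : ℕ → (windowAutomaton n k P).Q}
    (hρ : (windowAutomaton n k P).IsRun α ρ) (x : ℕ) : P x (window k α x) := by
  obtain ⟨hρ₀, hstep⟩ := hρ
  choose r w hρw hhead hP hcont using hstep
  have hsucc : ∀ t, r (t + 1) = r t + 1 ∧ ∀ i : Fin k, w (t + 1) i.castSucc = w t i.succ := by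
    intro t
    simpa only [hρw t, Continues] using hcont (t + 1)
  have hr : ∀ t, r t = t := by
    intro t
    induction t with
    | zero => simpa [hρ₀, windowAutomaton, Continues] using hcont 0
    | succ t ih => rw [(hsucc t).1, ih]; push_cast; rfl
  have hw : ∀ i : Fin (k + 1), ∀ t, w t i = α (t + i) := by
    intro i
    induction i using Fin.induction with
    | zero => simpa using hhead
    | succ i ih =>
      intro t
      rw [← (hsucc t).2 i, ih, Fin.val_castSucc, Fin.val_succ, add_right_comm, add_assoc]
  have hwx : w x = window k α x := funext fun i => hw i x
  simpa [hr x, hwx] using hP x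

theorem coBuchiRecognisable_setOf_forall_window :
    CoBuchiRecognisable {α : ℕ → σ | ∀ x : ℕ, P x (window k α x)} := by
  refine ⟨windowAutomaton n k P, ext fun α => ?_⟩
  rw [mem_ofPred_eq, mem_ofPred_eq, Automaton.coBuchiAccepts_iff_exists_isRun _ rfl]
  exact ⟨fun hα => ⟨_, isRun_windowRun P hα⟩,
    fun ⟨_, hρ⟩ => forall_window_of_isRun P hρ⟩

end SlidingWindow

open SlidingWindow

def SatDisjWindow (m κ : ℕ) (pos neg : List (ℕ × Fin m)) (w : Fin (κ + 1) → Fin m → Bool) :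
    Prop :=
  (∃ p ∈ pos, w p.1 p.2 = true) ∨ (∃ p ∈ neg, w p.1 p.2 = false)

theorem satDisj_iff_satDisjWindow {m κ : ℕ} {pos neg : List (ℕ × Fin m)}
    (hmax : ∀ p ∈ pos ++ neg, p.1 ≤ κ) (α : ℕ → Fin m → Bool) (x : ℕ) :
    SatDisj m pos neg α x ↔ SatDisjWindow m κ pos neg (window κ α x) := by
  have hwin : ∀ p ∈ pos ++ neg, window κ α x (p.1 : Fin (κ + 1)) = α (x + p.1) := fun p hp => by
    rw [window, Fin.val_natCast, Nat.mod_eq_of_lt (Nat.lt_succ_of_le (hmax p hp))]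
  unfold SatDisj SatDisjWindow
  refine or_congr (exists_congr fun p => and_congr_right fun hp => ?_)
    (exists_congr fun p => and_congr_right fun hp => ?_) <;>
  rw [hwin p (by simp [hp])]

theorem coBuchiRecognisable_setOf_forall_satDisj {m κ : ℕ} [NeZero κ]
    {pos neg : List (ℕ × Fin m)} (hmax : ∀ p ∈ pos ++ neg, p.1 ≤ κ) (C : Fin κ → Prop) :
    CoBuchiRecognisable {α | ∀ x : ℕ, C x → SatDisj m pos neg α x} := by
  simp only [satDisj_iff_satDisjWindow hmax]
  exact coBuchiRecognisable_setOf_forall_window fun r w => C r → SatDisjWindow m κ pos neg w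

/-- The universal case: `α ⊨ ∀x φ(x)` iff every residue class mod the maximal shift `κ`
satisfies the disjunction everywhere; consequently the set of models is an intersection of
`κ` co-Büchi recognisable languages and is itself co-Büchi recognisable. -/
theorem universal_case (m κ : ℕ) (pos neg : List (ℕ × Fin m)) (hκ : 0 < κ)
    (hmax : ∀ p ∈ pos ++ neg, p.1 ≤ κ) :
    (∀ α : ℕ → (Fin m → Bool),
      ((∀ x : ℕ, SatDisj m pos neg α x) ↔
        ∀ s : ℕ, s < κ → ∀ x : ℕ, x % κ = s → SatDisj m pos neg α x)) ∧
    (∃ Ls : Fin κ → Set (ℕ → (Fin m → Bool)),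
      (∀ s : Fin κ, CoBuchiRecognisable (Ls s)) ∧
      {α | ∀ x : ℕ, SatDisj m pos neg α x} = ⋂ s : Fin κ, Ls s) ∧
    CoBuchiRecognisable {α | ∀ x : ℕ, SatDisj m pos neg α x} := by
  have : NeZero κ := ⟨hκ.ne'⟩
  refine ⟨fun α => ⟨fun h _ _ x _ => h x, fun h x => h _ (Nat.mod_lt x hκ) x rfl⟩,
    ⟨fun s => {α | ∀ x : ℕ, (x : Fin κ) = s → SatDisj m pos neg α x},
      fun s => coBuchiRecognisable_setOf_forall_satDisj hmax (· = s), ?_⟩, ?_⟩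
  · ext α
    simp only [mem_ofPred_eq, mem_iInter]
    exact ⟨fun h _ x _ => h x, fun h x => h x x rfl⟩
  · simpa using coBuchiRecognisable_setOf_forall_satDisj hmax (κ := κ) fun _ => True
end

section
/- Every existential-S1S-over-(∈,s) definable language of infinite words is co-Büchi recognisable, and conversely every co-Büchi recognisable language is definable by an existential S1S formula over (∈, s). Hence the existential fragment of S1S over (∈, s) captures exactly the co-Büchi languages. -/
inductive S1S : Type
  | atom (k x X : ℕ) : S1S
  | not : S1S → S1S
  | and : S1S → S1S → S1S
  | exFO (x : ℕ) : S1S → S1S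
  | exSO (X : ℕ) : S1S → S1S

def S1S.Sat (v : ℕ → ℕ) (A : ℕ → Set ℕ) : S1S → Prop
  | atom k x X => v x + k ∈ A X
  | .not φ => ¬ φ.Sat v A
  | .and φ ψ => φ.Sat v A ∧ ψ.Sat v A
  | exFO x φ => ∃ b : ℕ, φ.Sat (Function.update v x b) A
  | exSO X φ => ∃ B : Set ℕ, φ.Sat v (Function.update A X B)

/-- `φ` is purely first-order: no second-order quantifiers occur. -/
def S1S.FirstOrder : S1S → Prop
  | atom _ _ _ => True
  | .not φ => φ.FirstOrder
  | .and φ ψ => φ.FirstOrder ∧ ψ.FirstOrder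
  | exFO _ φ => φ.FirstOrder
  | exSO _ _ => False

/-- Existential fragment: a block of second-order existentials over a first-order matrix. -/
inductive S1S.ExFrag : S1S → Prop
  | fo {φ : S1S} : φ.FirstOrder → ExFrag φ
  | ex {φ : S1S} (X : ℕ) : ExFrag φ → ExFrag (S1S.exSO X φ)

/-- The sets `X_0, …, X_{m-1}` encoded by the characteristic word `α`. -/
def setsOf (m : ℕ) (α : ℕ → (Fin m → Bool)) : ℕ → Set ℕ :=
  fun X => {i | ∃ h : X < m, α i ⟨X, h⟩ = true}

/-- `φ` (a sentence with free set variables among `X_0, …, X_{m-1}`) defines the language `L`: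
its truth value depends only on the first `m` set variables (and on no first-order valuation),
and `L` is exactly the set of characteristic words of its models. -/
def Defines (m : ℕ) (φ : S1S) (L : Set (ℕ → (Fin m → Bool))) : Prop :=
  (∀ v v' : ℕ → ℕ, ∀ A A' : ℕ → Set ℕ, (∀ X, X < m → A X = A' X) →
      (φ.Sat v A ↔ φ.Sat v' A')) ∧
  L = {α | φ.Sat (fun _ => 0) (setsOf m α)}

def S1SDefinable (m : ℕ) (L : Set (ℕ → (Fin m → Bool))) : Prop :=
  ∃ φ : S1S, Defines m φ L

def ExS1SDefinable (m : ℕ) (L : Set (ℕ → (Fin m → Bool))) : Prop :=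
  ∃ φ : S1S, φ.ExFrag ∧ Defines m φ L

-- ============ infrastructure ============
open scoped Classical

namespace S1S

@[simp] lemma sat_atom (v A k x X) : (S1S.atom k x X).Sat v A ↔ v x + k ∈ A X := Iff.rfl
@[simp] lemma sat_not (v A φ) : (S1S.not φ).Sat v A ↔ ¬ φ.Sat v A := Iff.rfl
@[simp] lemma sat_and (v A φ ψ) : (S1S.and φ ψ).Sat v A ↔ φ.Sat v A ∧ ψ.Sat v A := Iff.rfl
@[simp] lemma sat_exFO (v A x φ) :
    (S1S.exFO x φ).Sat v A ↔ ∃ b : ℕ, φ.Sat (Function.update v x b) A := Iff.rfl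
@[simp] lemma sat_exSO (v A X φ) :
    (S1S.exSO X φ).Sat v A ↔ ∃ B : Set ℕ, φ.Sat v (Function.update A X B) := Iff.rfl

def fls : S1S := .and (.atom 0 0 0) (.not (.atom 0 0 0))
def tru : S1S := .not fls
def orr (φ ψ : S1S) : S1S := .not (.and (.not φ) (.not ψ))
def impl (φ ψ : S1S) : S1S := .not (.and φ (.not ψ))
def fa (φ : S1S) : S1S := .not (.exFO 0 (.not φ))
def bigAnd : List S1S → S1S
  | [] => tru
  | φ :: l => .and φ (bigAnd l)
def bigOr : List S1S → S1S
  | [] => fls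
  | φ :: l => orr φ (bigOr l)

@[simp] lemma sat_fls (v A) : fls.Sat v A ↔ False := by simp [fls]
@[simp] lemma sat_tru (v A) : tru.Sat v A ↔ True := by simp [tru]
@[simp] lemma sat_orr (v A φ ψ) : (orr φ ψ).Sat v A ↔ φ.Sat v A ∨ ψ.Sat v A := by
  simp [orr]; tauto
@[simp] lemma sat_impl (v A φ ψ) : (impl φ ψ).Sat v A ↔ (φ.Sat v A → ψ.Sat v A) := by
  simp [impl]
@[simp] lemma sat_fa (v A φ) : (fa φ).Sat v A ↔ ∀ b, φ.Sat (Function.update v 0 b) A := by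
  simp [fa]
lemma sat_bigAnd (v A l) : (bigAnd l).Sat v A ↔ ∀ φ ∈ l, φ.Sat v A := by
  induction l with
  | nil => simp [bigAnd]
  | cons φ l ih => simp [bigAnd, ih]
lemma sat_bigOr (v A l) : (bigOr l).Sat v A ↔ ∃ φ ∈ l, φ.Sat v A := by
  induction l with
  | nil => simp [bigOr]
  | cons φ l ih => simp [bigOr, ih]

@[simp] lemma fo_atom (k x X) : (S1S.atom k x X).FirstOrder := trivial
@[simp] lemma fo_not (φ : S1S) : (S1S.not φ).FirstOrder ↔ φ.FirstOrder := Iff.rfl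
@[simp] lemma fo_and (φ ψ : S1S) :
    (S1S.and φ ψ).FirstOrder ↔ φ.FirstOrder ∧ ψ.FirstOrder := Iff.rfl
@[simp] lemma fo_exFO (x) (φ : S1S) : (S1S.exFO x φ).FirstOrder ↔ φ.FirstOrder := Iff.rfl
@[simp] lemma fo_fls : fls.FirstOrder := ⟨trivial, trivial⟩
@[simp] lemma fo_tru : tru.FirstOrder := fo_fls
@[simp] lemma fo_orr {φ ψ : S1S} (h1 : φ.FirstOrder) (h2 : ψ.FirstOrder) :
    (orr φ ψ).FirstOrder := ⟨h1, h2⟩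
@[simp] lemma fo_impl {φ ψ : S1S} (h1 : φ.FirstOrder) (h2 : ψ.FirstOrder) :
    (impl φ ψ).FirstOrder := ⟨h1, h2⟩
@[simp] lemma fo_fa {φ : S1S} (h : φ.FirstOrder) : (fa φ).FirstOrder := h
lemma fo_bigAnd {l : List S1S} (h : ∀ φ ∈ l, φ.FirstOrder) : (bigAnd l).FirstOrder := by
  induction l with
  | nil => exact fo_tru
  | cons φ l ih => exact ⟨h φ (by simp), ih fun ψ hψ => h ψ (by simp [hψ])⟩
lemma fo_bigOr {l : List S1S} (h : ∀ φ ∈ l, φ.FirstOrder) : (bigOr l).FirstOrder := by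
  induction l with
  | nil => exact fo_fls
  | cons φ l ih => exact fo_orr (h φ (by simp)) (ih fun ψ hψ => h ψ (by simp [hψ]))

lemma exFrag_foldr {ψ : S1S} (h : ψ.FirstOrder) (l : List ℕ) :
    (l.foldr S1S.exSO ψ).ExFrag := by
  induction l with
  | nil => exact .fo h
  | cons X l ih => exact .ex X ih

lemma ExFrag.exists_foldr {φ : S1S} (h : φ.ExFrag) :
    ∃ (ψ : S1S) (l : List ℕ), φ = l.foldr S1S.exSO ψ ∧ ψ.FirstOrder := by
  induction h with
  | fo h => exact ⟨_, [], rfl, h⟩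
  | ex X h ih =>
    obtain ⟨ψ, l, rfl, hfo⟩ := ih
    exact ⟨ψ, X :: l, rfl, hfo⟩

lemma sat_foldr_exSO (l : List ℕ) (ψ : S1S) (v : ℕ → ℕ) (A : ℕ → Set ℕ) :
    (l.foldr S1S.exSO ψ).Sat v A ↔
      ∃ A' : ℕ → Set ℕ, (∀ X, X ∉ l → A' X = A X) ∧ ψ.Sat v A' := by
  induction l generalizing A with
  | nil =>
    simp only [List.foldr_nil]
    constructor
    · exact fun h => ⟨A, fun X _ => rfl, h⟩
    · rintro ⟨A', hA, h⟩
      have : A' = A := funext fun X => hA X (by simp)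
      rwa [this] at h
  | cons X l ih =>
    simp only [List.foldr_cons, sat_exSO]
    constructor
    · rintro ⟨B, hB⟩
      obtain ⟨A', h1, h2⟩ := (ih _).1 hB
      refine ⟨A', fun Y hY => ?_, h2⟩
      rw [h1 Y (fun hl => hY (by simp [hl]))]
      exact Function.update_of_ne (by simpa using fun h => hY (by simp [h])) _ _
    · rintro ⟨A', h1, h2⟩
      refine ⟨A' X, (ih _).2 ⟨A', fun Y hY => ?_, h2⟩⟩
      by_cases hYX : Y = X
      · subst hYX; simp
      · rw [Function.update_of_ne hYX]
        exact h1 Y (by simp [hY, hYX])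

end S1S

namespace S1S

def Bounded (K N : ℕ) : S1S → Prop
  | .atom k _ X => k ≤ K ∧ X < N
  | .not φ => Bounded K N φ
  | .and φ ψ => Bounded K N φ ∧ Bounded K N ψ
  | .exFO _ φ => Bounded K N φ
  | .exSO _ φ => Bounded K N φ

lemma bounded_mono {K N K' N' : ℕ} (hK : K ≤ K') (hN : N ≤ N') :
    ∀ {φ : S1S}, Bounded K N φ → Bounded K' N' φ
  | .atom k x X, h => ⟨h.1.trans hK, h.2.trans_le hN⟩
  | .not φ, h => bounded_mono hK hN (φ := φ) h
  | .and φ ψ, h => ⟨bounded_mono hK hN h.1, bounded_mono hK hN h.2⟩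
  | .exFO x φ, h => bounded_mono hK hN (φ := φ) h
  | .exSO X φ, h => bounded_mono hK hN (φ := φ) h

lemma exists_bounded : ∀ φ : S1S, ∃ K N, Bounded K N φ
  | .atom k x X => ⟨k, X + 1, le_refl _, Nat.lt_succ_self _⟩
  | .not φ => exists_bounded φ
  | .and φ ψ => by
    obtain ⟨K1, N1, h1⟩ := exists_bounded φ
    obtain ⟨K2, N2, h2⟩ := exists_bounded ψ
    exact ⟨max K1 K2, max N1 N2,
      bounded_mono (le_max_left _ _) (le_max_left _ _) h1,
      bounded_mono (le_max_right _ _) (le_max_right _ _) h2⟩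
  | .exFO x φ => exists_bounded φ
  | .exSO X φ => exists_bounded φ

end S1S

/-- The `(K,N)`-window of `A` at position `p`. -/
def winS (K N : ℕ) (A : ℕ → Set ℕ) (p : ℕ) : Fin (K + 1) → Fin N → Prop :=
  fun k X => (p + (k : ℕ)) ∈ A (X : ℕ)

/-- Key invariance: a first-order formula with window bounds `(K,N)` cannot
distinguish interpretations realizing the same windows (matching at valuation points). -/
lemma sat_invariant (K N : ℕ) :
    ∀ (ψ : S1S), ψ.FirstOrder → S1S.Bounded K N ψ →
    ∀ (A A' : ℕ → Set ℕ) (v v' : ℕ → ℕ),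
      (∀ p, ∃ p', winS K N A p = winS K N A' p') →
      (∀ p', ∃ p, winS K N A' p' = winS K N A p) →
      (∀ x, winS K N A (v x) = winS K N A' (v' x)) →
      (ψ.Sat v A ↔ ψ.Sat v' A') := by
  intro ψ
  induction ψ with
  | atom k x X =>
    intro _ hb A A' v v' h1 h1' h2
    obtain ⟨hk, hX⟩ := hb
    have := congrFun (congrFun (h2 x) ⟨k, by omega⟩) ⟨X, hX⟩
    simpa [winS] using iff_of_eq this
  | not φ ih =>
    intro hfo hb A A' v v' h1 h1' h2
    exact not_congr (ih hfo hb A A' v v' h1 h1' h2)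
  | and φ ψ ihφ ihψ =>
    intro hfo hb A A' v v' h1 h1' h2
    exact and_congr (ihφ hfo.1 hb.1 A A' v v' h1 h1' h2)
      (ihψ hfo.2 hb.2 A A' v v' h1 h1' h2)
  | exFO x φ ih =>
    intro hfo hb A A' v v' h1 h1' h2
    constructor
    · rintro ⟨b, hb'⟩
      obtain ⟨b', hbb⟩ := h1 b
      refine ⟨b', (ih hfo hb A A' _ _ h1 h1' fun y => ?_).1 hb'⟩
      by_cases hyx : y = x
      · subst hyx; simp [hbb]
      · simp [Function.update_of_ne hyx, h2 y]
    · rintro ⟨b', hb'⟩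
      obtain ⟨b, hbb⟩ := h1' b'
      refine ⟨b, (ih hfo hb A A' _ _ h1 h1' fun y => ?_).2 hb'⟩
      by_cases hyx : y = x
      · subst hyx; simp [hbb]
      · simp [Function.update_of_ne hyx, h2 y]
  | exSO X φ ih =>
    intro hfo
    exact absurd hfo (by simp [S1S.FirstOrder])


section WindowAutomaton

variable (K N : ℕ)

/-- Boolean windows of a word. -/
def winB (δ : ℕ → Fin N → Bool) (p : ℕ) : Fin (K + 1) → Fin N → Bool :=
  fun k X => δ (p + (k : ℕ)) X

/-- The finite set of windows realized in `δ`. -/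
noncomputable def realizedW (δ : ℕ → Fin N → Bool) : Finset (Fin (K + 1) → Fin N → Bool) :=
  Finset.univ.filter (fun w => ∃ p, winB K N δ p = w)

lemma mem_realizedW {δ w} : w ∈ realizedW K N δ ↔ ∃ p, winB K N δ p = w := by
  simp [realizedW]

abbrev WQ : Type :=
  (Fin (K + 1) → Fin N → Bool) × Fin (K + 2) × Finset (Fin (K + 1) → Fin N → Bool) ×
    Option (Fin (K + 1) → Fin N → Bool)

def bufStep (q : WQ K N) (a : Fin N → Bool) : Fin (K + 1) → Fin N → Bool :=
  fun j X => if h : (j : ℕ) + 1 < K + 1 then q.1 ⟨(j : ℕ) + 1, h⟩ X else a X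

def cntStep (q : WQ K N) : Fin (K + 2) :=
  if h : (q.2.1 : ℕ) + 1 < K + 2 then ⟨(q.2.1 : ℕ) + 1, h⟩ else q.2.1

noncomputable def wstep (q : WQ K N) (a : Fin N → Bool) : WQ K N :=
  if (cntStep K N q : ℕ) = K + 1 then
    (bufStep K N q a, cntStep K N q, insert (bufStep K N q a) q.2.2.1,
      some (q.2.2.2.getD (bufStep K N q a)))
  else (bufStep K N q a, cntStep K N q, q.2.2.1, q.2.2.2)

def wq0 : WQ K N := ⟨fun _ _ => false, 0, ∅, none⟩

noncomputable def wrun (δ : ℕ → Fin N → Bool) : ℕ → WQ K N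
  | 0 => wq0 K N
  | i + 1 => wstep K N (wrun δ i) (δ i)

variable {K N}

lemma wstep_buf (q a) : (wstep K N q a).1 = bufStep K N q a := by
  unfold wstep; split <;> rfl

lemma wstep_cnt (q a) : (wstep K N q a).2.1 = cntStep K N q := by
  unfold wstep; split <;> rfl

lemma wstep_seen_full (q a) (h : (cntStep K N q : ℕ) = K + 1) :
    (wstep K N q a).2.2.1 = insert (bufStep K N q a) q.2.2.1 := by
  unfold wstep; rw [if_pos h]

lemma wstep_seen_nf (q a) (h : ¬ (cntStep K N q : ℕ) = K + 1) :
    (wstep K N q a).2.2.1 = q.2.2.1 := by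
  unfold wstep; rw [if_neg h]

lemma wstep_t0_full (q a) (h : (cntStep K N q : ℕ) = K + 1) :
    (wstep K N q a).2.2.2 = some (q.2.2.2.getD (bufStep K N q a)) := by
  unfold wstep; rw [if_pos h]

lemma wstep_t0_nf (q a) (h : ¬ (cntStep K N q : ℕ) = K + 1) :
    (wstep K N q a).2.2.2 = q.2.2.2 := by
  unfold wstep; rw [if_neg h]

lemma wrun_c (δ) : ∀ i, ((wrun K N δ i).2.1 : ℕ) = min i (K + 1) := by
  intro i
  induction i with
  | zero => simp [wrun, wq0]
  | succ i ih =>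
    show ((wstep K N (wrun K N δ i) (δ i)).2.1 : ℕ) = _
    rw [wstep_cnt]
    unfold cntStep
    split <;> rename_i h
    · rw [Fin.val_mk]; omega
    · omega

lemma cnt_full_iff (δ) (i : ℕ) :
    ((cntStep K N (wrun K N δ i) : ℕ) = K + 1) ↔ K ≤ i := by
  have hc := wrun_c δ (K := K) (N := N) i
  unfold cntStep
  split <;> rename_i h
  · rw [Fin.val_mk]; omega
  · omega

lemma wrun_buf (δ) : ∀ (i : ℕ) (j : Fin (K + 1)), K + 1 ≤ i + (j : ℕ) →
    (wrun K N δ i).1 j = δ (i + (j : ℕ) - (K + 1)) := by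
  intro i
  induction i with
  | zero => intro j hj; exact absurd hj (by have := j.isLt; omega)
  | succ i ih =>
    intro j hj
    show (wstep K N (wrun K N δ i) (δ i)).1 j = _
    rw [wstep_buf]
    unfold bufStep
    by_cases h : (j : ℕ) + 1 < K + 1
    · funext X
      rw [dif_pos h]
      have := congrFun (ih ⟨(j : ℕ) + 1, h⟩ (by simp only [Fin.val_mk]; omega)) X
      simp only at this
      rw [this]
      congr 1
      omega
    · have hjK : (j : ℕ) = K := by have := j.isLt; omega
      funext X
      rw [dif_neg h]
      congr 1
      omega

lemma wrun_buf_full (δ) (i : ℕ) (hiK : K ≤ i) :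
    (wrun K N δ (i + 1)).1 = winB K N δ (i - K) := by
  funext j X
  have := congrFun ((wrun_buf δ (i + 1) j) (by omega)) X
  rw [this]
  simp only [winB]
  congr 2
  omega

lemma wrun_seen (δ) : ∀ i,
    (wrun K N δ i).2.2.1 = (Finset.range (i - K)).image (winB K N δ) := by
  intro i
  induction i with
  | zero => simp [wrun, wq0]
  | succ i ih =>
    show (wstep K N (wrun K N δ i) (δ i)).2.2.1 = _
    by_cases hiK : K ≤ i
    · rw [wstep_seen_full _ _ ((cnt_full_iff δ i).2 hiK), ih]
      have hb : bufStep K N (wrun K N δ i) (δ i) = winB K N δ (i - K) := by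
        rw [← wstep_buf (wrun K N δ i) (δ i)]
        exact wrun_buf_full δ i hiK
      rw [hb, show i + 1 - K = (i - K) + 1 by omega, Finset.range_add_one, Finset.image_insert]
    · rw [wstep_seen_nf _ _ (by rw [cnt_full_iff]; exact hiK), ih,
        show i - K = 0 by omega, show i + 1 - K = 0 by omega]

lemma wrun_t0 (δ) : ∀ i,
    (wrun K N δ i).2.2.2 = if K + 1 ≤ i then some (winB K N δ 0) else none := by
  intro i
  induction i with
  | zero => simp [wrun, wq0]
  | succ i ih =>
    show (wstep K N (wrun K N δ i) (δ i)).2.2.2 = _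
    by_cases hiK : K ≤ i
    · rw [wstep_t0_full _ _ ((cnt_full_iff δ i).2 hiK), ih]
      by_cases hi1 : K + 1 ≤ i
      · simp [hi1, show K + 1 ≤ i + 1 by omega]
      · have hb : bufStep K N (wrun K N δ i) (δ i) = winB K N δ 0 := by
          rw [← wstep_buf (wrun K N δ i) (δ i)]
          have := wrun_buf_full δ i hiK
          rwa [show i - K = 0 by omega] at this
        simp [hi1, show K + 1 ≤ i + 1 by omega, hb]
    · rw [wstep_t0_nf _ _ (by rw [cnt_full_iff]; exact hiK), ih]
      simp [show ¬ (K + 1 ≤ i) by omega, show ¬ (K + 1 ≤ i + 1) by omega]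

end WindowAutomaton

section Accept

variable (K N : ℕ) (G : Finset (Fin (K + 1) → Fin N → Bool) → (Fin (K + 1) → Fin N → Bool) → Prop)

noncomputable def autW : Automaton (Fin N → Bool) where
  Q := WQ K N
  fin := inferInstance
  Δ := fun q a q' => q' = wstep K N q a
  q0 := wq0 K N
  F := {q | ∃ w, q.2.2.2 = some w ∧ G q.2.2.1 w}

variable {K N G}

lemma autW_run_unique {δ : ℕ → Fin N → Bool} {ρ : ℕ → WQ K N}
    (h : (autW K N G).IsRun δ ρ) : ρ = wrun K N δ := by
  funext i
  induction i with
  | zero => exact h.1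
  | succ i ih => rw [show wrun K N δ (i+1) = wstep K N (wrun K N δ i) (δ i) from rfl, ← ih]
                 exact h.2 i

lemma seen_stab (δ : ℕ → Fin N → Bool) :
    ∃ i₀, K + 1 ≤ i₀ ∧ ∀ i, i₀ ≤ i →
      (wrun K N δ i).2.2.1 = realizedW K N δ ∧
      (wrun K N δ i).2.2.2 = some (winB K N δ 0) := by
  classical
  set pw : (Fin (K + 1) → Fin N → Bool) → ℕ :=
    fun w => if h : ∃ p, winB K N δ p = w then Nat.find h else 0 with hpw
  refine ⟨(realizedW K N δ).sup pw + K + 1, by omega, fun i hi => ⟨?_, ?_⟩⟩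
  · rw [wrun_seen]
    apply Finset.Subset.antisymm
    · intro w hw
      simp only [Finset.mem_image, Finset.mem_range] at hw
      obtain ⟨p, _, rfl⟩ := hw
      exact (mem_realizedW K N).2 ⟨p, rfl⟩
    · intro w hw
      obtain ⟨p, hp⟩ := (mem_realizedW K N).1 hw
      have hex : ∃ p, winB K N δ p = w := ⟨p, hp⟩
      have h1 : pw w ≤ (realizedW K N δ).sup pw := Finset.le_sup hw
      have h2 : winB K N δ (pw w) = w := by
        rw [hpw]; simp only [dif_pos hex]; exact Nat.find_spec hex
      simp only [Finset.mem_image, Finset.mem_range]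
      exact ⟨pw w, by omega, h2⟩
  · rw [wrun_t0, if_pos (by omega)]

lemma autW_accepts (δ : ℕ → Fin N → Bool) :
    (autW K N G).CoBuchiAccepts δ ↔ G (realizedW K N δ) (winB K N δ 0) := by
  obtain ⟨i₀, hi₀, hstab⟩ := seen_stab (K := K) (N := N) δ
  constructor
  · rintro ⟨ρ, hrun, hfin⟩
    have hρ := autW_run_unique hrun
    subst hρ
    obtain ⟨B, hB⟩ := hfin.bddAbove
    have hmem : max i₀ (B + 1) ∉ {i | wrun K N δ i ∉ (autW K N G).F} := by
      intro h
      exact absurd (hB h) (by omega)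
    simp only [Set.mem_setOf_eq, not_not] at hmem
    obtain ⟨w, hw, hGw⟩ := hmem
    obtain ⟨hseen, ht0⟩ := hstab _ (le_max_left _ _)
    rw [ht0] at hw
    cases hw
    rwa [hseen] at hGw
  · intro hG
    refine ⟨wrun K N δ, ⟨rfl, fun i => rfl⟩, Set.Finite.subset (Set.finite_Iio i₀) ?_⟩
    intro i hi
    simp only [Set.mem_setOf_eq] at hi
    by_contra hlt
    simp only [Set.mem_Iio, not_lt] at hlt
    obtain ⟨hseen, ht0⟩ := hstab i hlt
    exact hi ⟨winB K N δ 0, ht0, hseen ▸ hG⟩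

end Accept

section Projection

variable {m N : ℕ} (l : List ℕ)

/-- Compatibility of a letter over `Fin N` with a letter over `Fin m`,
off the quantified coordinates `l`. -/
def Compat (m N : ℕ) (l : List ℕ) (a : Fin m → Bool) (d : Fin N → Bool) : Prop :=
  ∀ X : Fin N, (X : ℕ) ∉ l → d X = if h : (X : ℕ) < m then a ⟨(X : ℕ), h⟩ else false

noncomputable def projAut (m : ℕ) (l : List ℕ) (Aut : Automaton (Fin N → Bool)) :
    Automaton (Fin m → Bool) where
  Q := Aut.Q
  fin := Aut.fin
  Δ := fun q a q' => ∃ d : Fin N → Bool, Compat m N l a d ∧ Aut.Δ q d q'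
  q0 := Aut.q0
  F := Aut.F

lemma projAut_accepts (Aut : Automaton (Fin N → Bool)) (α : ℕ → Fin m → Bool) :
    (projAut m l Aut).CoBuchiAccepts α ↔
      ∃ δ : ℕ → Fin N → Bool, (∀ i, Compat m N l (α i) (δ i)) ∧ Aut.CoBuchiAccepts δ := by
  constructor
  · rintro ⟨ρ, ⟨h0, hs⟩, hfin⟩
    choose d hcomp hΔ using hs
    exact ⟨d, hcomp, ρ, ⟨h0, hΔ⟩, hfin⟩
  · rintro ⟨δ, hcomp, ρ, ⟨h0, hs⟩, hfin⟩
    exact ⟨ρ, ⟨h0, fun i => ⟨δ i, hcomp i, hs i⟩⟩, hfin⟩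

end Projection

lemma winS_setsOf (K N : ℕ) (δ : ℕ → Fin N → Bool) (p : ℕ) :
    winS K N (setsOf N δ) p = fun k X => (winB K N δ p k X = true) := by
  funext k X
  apply propext
  simp [winS, winB, setsOf]

lemma winS_eq_of_winB {K N : ℕ} {δ δ' : ℕ → Fin N → Bool} {p p' : ℕ}
    (h : winB K N δ p = winB K N δ' p') :
    winS K N (setsOf N δ) p = winS K N (setsOf N δ') p' := by
  rw [winS_setsOf, winS_setsOf, h]

theorem exS1S_to_coBuchi {m : ℕ} {L : Set (ℕ → Fin m → Bool)} :
    ExS1SDefinable m L → CoBuchiRecognisable L := by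
  rintro ⟨φ, hex, _, hL⟩
  obtain ⟨ψ, l, rfl, hfo⟩ := hex.exists_foldr
  obtain ⟨K, N₀, hb₀⟩ := S1S.exists_bounded ψ
  set N := max N₀ m with hN
  have hb : S1S.Bounded K N ψ := S1S.bounded_mono le_rfl (le_max_left _ _) hb₀
  have hmN : m ≤ N := le_max_right _ _
  set v0 : ℕ → ℕ := fun _ => 0 with hv0
  set G : Finset (Fin (K+1) → Fin N → Bool) → (Fin (K+1) → Fin N → Bool) → Prop :=
    fun S w₀ => ∃ δ, realizedW K N δ = S ∧ winB K N δ 0 = w₀ ∧ ψ.Sat v0 (setsOf N δ)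
    with hG
  have G_iff : ∀ δ : ℕ → Fin N → Bool,
      G (realizedW K N δ) (winB K N δ 0) ↔ ψ.Sat v0 (setsOf N δ) := by
    intro δ
    constructor
    · rintro ⟨δ', hre, hw0, hsat⟩
      refine (sat_invariant K N ψ hfo hb (setsOf N δ') (setsOf N δ) v0 v0 ?_ ?_ ?_).1 hsat
      · intro p
        have : winB K N δ' p ∈ realizedW K N δ := hre ▸ (mem_realizedW K N).2 ⟨p, rfl⟩
        obtain ⟨p', hp'⟩ := (mem_realizedW K N).1 this
        exact ⟨p', winS_eq_of_winB hp'.symm⟩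
      · intro p'
        have : winB K N δ p' ∈ realizedW K N δ' := by
          rw [hre]; exact (mem_realizedW K N).2 ⟨p', rfl⟩
        obtain ⟨p, hp⟩ := (mem_realizedW K N).1 this
        exact ⟨p, winS_eq_of_winB hp.symm⟩
      · intro x
        exact winS_eq_of_winB hw0
    · intro hsat
      exact ⟨δ, rfl, rfl, hsat⟩
  refine ⟨projAut m l (autW K N G), ?_⟩
  ext α
  rw [hL]
  simp only [Set.mem_setOf_eq]
  rw [S1S.sat_foldr_exSO, projAut_accepts]
  constructor
  · rintro ⟨A', hA', hsat⟩
    set δ : ℕ → Fin N → Bool := fun i X => decide ((i : ℕ) ∈ A' (X : ℕ)) with hδ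
    have hwin : ∀ p, winS K N A' p = winS K N (setsOf N δ) p := by
      intro p
      funext k X
      apply propext
      simp [winS, setsOf, hδ, X.isLt]
    refine ⟨δ, ?_, ?_⟩
    · intro i X hX
      rw [hδ]
      simp only
      rw [hA' (X : ℕ) hX]
      by_cases hm : (X : ℕ) < m
      · rw [dif_pos hm]
        by_cases hα : α i ⟨(X : ℕ), hm⟩ = true <;> simp [setsOf, hm, hα]
      · rw [dif_neg hm]
        simp [setsOf, hm]
    · rw [autW_accepts, G_iff]
      exact (sat_invariant K N ψ hfo hb A' (setsOf N δ) v0 v0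
        (fun p => ⟨p, hwin p⟩) (fun p => ⟨p, (hwin p).symm⟩) (fun x => hwin _)).1 hsat
  · rintro ⟨δ, hcomp, hacc⟩
    rw [autW_accepts, G_iff] at hacc
    set A' : ℕ → Set ℕ := fun X => if h : X < N then setsOf N δ X else setsOf m α X with hA'
    have hwin : ∀ p, winS K N A' p = winS K N (setsOf N δ) p := by
      intro p
      funext k X
      show ((p + (k : ℕ)) ∈ A' (X : ℕ)) = ((p + (k : ℕ)) ∈ setsOf N δ (X : ℕ))
      have hAX : A' (X : ℕ) = setsOf N δ (X : ℕ) := dif_pos X.isLt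
      rw [hAX]
    refine ⟨A', ?_, ?_⟩
    · intro X hX
      show (if h : X < N then setsOf N δ X else setsOf m α X) = setsOf m α X
      by_cases hXN : X < N
      · rw [dif_pos hXN]
        ext i
        have := hcomp i ⟨X, hXN⟩ (by simpa using hX)
        simp only at this
        by_cases hm : X < m
        · simp only [setsOf, Set.mem_setOf_eq]
          rw [dif_pos hm] at this
          constructor
          · rintro ⟨h', he⟩
            exact ⟨hm, by rw [← this]; exact he⟩
          · rintro ⟨h', he⟩
            exact ⟨hXN, by rw [this]; exact he⟩
        · rw [dif_neg hm] at this
          simp [setsOf, hm, this, hXN]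
      · rw [dif_neg hXN]
    · exact (sat_invariant K N ψ hfo hb (setsOf N δ) A' v0 v0
        (fun p => ⟨p, (hwin p).symm⟩) (fun p => ⟨p, hwin p⟩) (fun x => (hwin _).symm)).1 hacc

section Converse

open S1S

attribute [local instance] Automaton.fin

variable {m : ℕ} (Aut : Automaton (Fin m → Bool))

/-- number of states -/
noncomputable def nQ : ℕ := Fintype.card Aut.Q
noncomputable def eQ : Aut.Q ≃ Fin (nQ Aut) := Fintype.equivFin Aut.Q

noncomputable def Yi (q : Aut.Q) : ℕ := m + (eQ Aut q : ℕ)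
noncomputable def Zi : ℕ := m + nQ Aut
noncomputable def Wi : ℕ := m + nQ Aut + 1

/-- `x + k ∈ X_J` -/
def memF (k J : ℕ) : S1S := S1S.atom k 0 J

noncomputable def qList : List Aut.Q := Finset.univ.toList
noncomputable def letterIs (a : Fin m → Bool) : S1S :=
  bigAnd ((List.finRange m).map fun j => if a j then memF 0 (j : ℕ) else .not (memF 0 (j : ℕ)))

noncomputable def psiA : S1S :=
  (S1S.exFO 0 (memF 0 (Zi Aut))).and <|
  (fa (.not (memF 1 (Zi Aut)))).and <|
  (fa (impl (memF 0 (Zi Aut)) (memF 0 (Yi Aut Aut.q0)))).and <|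
  (fa (bigOr ((qList Aut).map fun q => memF 0 (Yi Aut q)))).and <|
  (fa (bigAnd ((qList Aut).map fun q => impl (memF 0 (Yi Aut q))
      (bigAnd ((qList Aut).map fun q' =>
        if q = q' then tru else .not (memF 0 (Yi Aut q'))))))).and <|
  (fa (bigOr ((qList Aut).map fun q => bigOr (((Finset.univ : Finset (Fin m → Bool)).toList).map
      fun a => bigOr ((qList Aut).map fun q' =>
        if Aut.Δ q a q' then (memF 0 (Yi Aut q)).and ((letterIs a).and (memF 1 (Yi Aut q')))
        else fls))))).and <|
  (S1S.exFO 0 (memF 0 (Wi Aut))).and <|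
  (fa (impl (memF 0 (Wi Aut)) (memF 1 (Wi Aut)))).and <|
  (fa (impl (memF 0 (Wi Aut)) (bigOr ((qList Aut).map fun q =>
      if q ∈ Aut.F then memF 0 (Yi Aut q) else fls))))

noncomputable def lList : List ℕ := (List.range (nQ Aut + 2)).map (fun j => m + j)

noncomputable def phiA : S1S := (lList Aut).foldr S1S.exSO (psiA Aut)

lemma fo_memF (k J : ℕ) : (memF k J).FirstOrder := trivial

lemma fo_psiA : (psiA Aut).FirstOrder := by
  refine ⟨trivial, fo_fa trivial, fo_fa (fo_impl trivial trivial),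
    fo_fa (fo_bigOr ?_), fo_fa (fo_bigAnd ?_), fo_fa (fo_bigOr ?_), trivial,
    fo_fa (fo_impl trivial trivial), fo_fa (fo_impl trivial (fo_bigOr ?_))⟩
  · rintro φ hφ
    obtain ⟨q, _, rfl⟩ := List.mem_map.1 hφ
    exact trivial
  · rintro φ hφ
    obtain ⟨q, _, rfl⟩ := List.mem_map.1 hφ
    refine fo_impl trivial (fo_bigAnd ?_)
    rintro φ' hφ'
    obtain ⟨q', _, rfl⟩ := List.mem_map.1 hφ'
    split
    · exact fo_tru
    · exact trivial
  · rintro φ hφ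
    obtain ⟨q, _, rfl⟩ := List.mem_map.1 hφ
    refine fo_bigOr ?_
    rintro φ' hφ'
    obtain ⟨a, _, rfl⟩ := List.mem_map.1 hφ'
    refine fo_bigOr ?_
    rintro φ'' hφ''
    obtain ⟨q', _, rfl⟩ := List.mem_map.1 hφ''
    split
    · refine ⟨trivial, ?_, trivial⟩
      refine fo_bigAnd ?_
      rintro φ''' hφ'''
      obtain ⟨j, _, rfl⟩ := List.mem_map.1 hφ'''
      split
      · exact trivial
      · exact trivial
    · exact fo_fls
  · rintro φ hφ
    obtain ⟨q, _, rfl⟩ := List.mem_map.1 hφ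
    split
    · exact trivial
    · exact fo_fls

lemma exFrag_phiA : (phiA Aut).ExFrag := exFrag_foldr (fo_psiA Aut) _

@[simp] lemma sat_memF (v C k J) : (memF k J).Sat v C ↔ v 0 + k ∈ C J := Iff.rfl

lemma sat_letterIs (v : ℕ → ℕ) (C : ℕ → Set ℕ) (a : Fin m → Bool) :
    (letterIs a).Sat v C ↔ ∀ j : Fin m, (v 0 ∈ C (j : ℕ) ↔ a j = true) := by
  rw [letterIs, sat_bigAnd]
  constructor
  · intro h j
    have := h _ (List.mem_map.2 ⟨j, List.mem_finRange j, rfl⟩)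
    by_cases ha : a j = true
    · rw [if_pos ha] at this
      simp only [sat_memF, Nat.add_zero] at this
      exact ⟨fun _ => ha, fun _ => this⟩
    · rw [if_neg ha] at this
      simp only [sat_not, sat_memF, Nat.add_zero] at this
      exact ⟨fun hc => absurd hc this, fun hc => absurd hc ha⟩
  · intro h φ hφ
    obtain ⟨j, _, rfl⟩ := List.mem_map.1 hφ
    by_cases ha : a j = true
    · rw [if_pos ha]
      simp only [sat_memF, Nat.add_zero]
      exact (h j).2 ha
    · rw [if_neg ha]
      simp only [sat_not, sat_memF, Nat.add_zero]
      exact fun hc => ha ((h j).1 hc)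

lemma mem_qList (q : Aut.Q) : q ∈ qList Aut := by simp [qList]

lemma sat_psiA (v : ℕ → ℕ) (C : ℕ → Set ℕ) :
    (psiA Aut).Sat v C ↔
      ((∃ b, b ∈ C (Zi Aut)) ∧
       (∀ b : ℕ, b + 1 ∉ C (Zi Aut)) ∧
       (∀ b, b ∈ C (Zi Aut) → b ∈ C (Yi Aut Aut.q0)) ∧
       (∀ b, ∃ q, b ∈ C (Yi Aut q)) ∧
       (∀ b (q q' : Aut.Q), b ∈ C (Yi Aut q) → b ∈ C (Yi Aut q') → q = q') ∧
       (∀ b, ∃ q a q', Aut.Δ q a q' ∧ b ∈ C (Yi Aut q) ∧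
          (∀ j : Fin m, (b ∈ C (j : ℕ) ↔ a j = true)) ∧ b + 1 ∈ C (Yi Aut q')) ∧
       (∃ b, b ∈ C (Wi Aut)) ∧
       (∀ b, b ∈ C (Wi Aut) → b + 1 ∈ C (Wi Aut)) ∧
       (∀ b, b ∈ C (Wi Aut) → ∃ q, q ∈ Aut.F ∧ b ∈ C (Yi Aut q))) := by
  rw [psiA]
  refine and_congr ?_ (and_congr ?_ (and_congr ?_ (and_congr ?_ (and_congr ?_
    (and_congr ?_ (and_congr ?_ (and_congr ?_ ?_)))))))
  · simp
  · simp
  · simp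
  · rw [sat_fa]
    refine forall_congr' fun b => ?_
    rw [sat_bigOr]
    constructor
    · rintro ⟨φ, hφ, hsat⟩
      obtain ⟨q, _, rfl⟩ := List.mem_map.1 hφ
      exact ⟨q, by simpa using hsat⟩
    · rintro ⟨q, hq⟩
      exact ⟨_, List.mem_map.2 ⟨q, mem_qList Aut q, rfl⟩, by simpa using hq⟩
  · rw [sat_fa]
    constructor
    · intro h b q q' hq hq'
      have := (sat_bigAnd _ _ _).1 (h b) _ (List.mem_map.2 ⟨q, mem_qList Aut q, rfl⟩)
      rw [sat_impl] at this
      have := (sat_bigAnd _ _ _).1 (this (by simpa using hq)) _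
        (List.mem_map.2 ⟨q', mem_qList Aut q', rfl⟩)
      by_contra hne
      rw [if_neg hne] at this
      have hnot : ¬ (b ∈ C (Yi Aut q')) := by simpa using this
      exact hnot hq'
    · intro h b
      rw [sat_bigAnd]
      rintro φ hφ
      obtain ⟨q, _, rfl⟩ := List.mem_map.1 hφ
      rw [sat_impl]
      intro hq
      rw [sat_bigAnd]
      rintro φ' hφ'
      obtain ⟨q', _, rfl⟩ := List.mem_map.1 hφ'
      by_cases he : q = q'
      · rw [if_pos he]; simp
      · rw [if_neg he]
        simp only [sat_not, sat_memF, Nat.add_zero]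
        intro hq'
        exact he (h b q q' (by simpa using hq) hq')
  · rw [sat_fa]
    refine forall_congr' fun b => ?_
    rw [sat_bigOr]
    constructor
    · rintro ⟨φ, hφ, hsat⟩
      obtain ⟨q, _, rfl⟩ := List.mem_map.1 hφ
      rw [sat_bigOr] at hsat
      obtain ⟨φ', hφ', hsat⟩ := hsat
      obtain ⟨a, _, rfl⟩ := List.mem_map.1 hφ'
      rw [sat_bigOr] at hsat
      obtain ⟨φ'', hφ'', hsat⟩ := hsat
      obtain ⟨q', _, rfl⟩ := List.mem_map.1 hφ''
      by_cases hΔ : Aut.Δ q a q'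
      · rw [if_pos hΔ] at hsat
        rw [sat_and, sat_and] at hsat
        obtain ⟨h1, h2, h3⟩ := hsat
        refine ⟨q, a, q', hΔ, by simpa using h1, ?_, by simpa using h3⟩
        have := (sat_letterIs _ _ _).1 h2
        simpa using this
      · rw [if_neg hΔ] at hsat
        exact absurd hsat (by simp)
    · rintro ⟨q, a, q', hΔ, h1, h2, h3⟩
      refine ⟨_, List.mem_map.2 ⟨q, mem_qList Aut q, rfl⟩, ?_⟩
      rw [sat_bigOr]
      refine ⟨_, List.mem_map.2 ⟨a, by simp, rfl⟩, ?_⟩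
      rw [sat_bigOr]
      refine ⟨_, List.mem_map.2 ⟨q', mem_qList Aut q', rfl⟩, ?_⟩
      rw [if_pos hΔ]
      refine ⟨by simpa using h1, ?_, by simpa using h3⟩
      rw [sat_letterIs]
      simpa using h2
  · simp
  · simp
  · rw [sat_fa]
    refine forall_congr' fun b => ?_
    rw [sat_impl]
    refine imp_congr (by simp) ?_
    rw [sat_bigOr]
    constructor
    · rintro ⟨φ, hφ, hsat⟩
      obtain ⟨q, _, rfl⟩ := List.mem_map.1 hφ
      by_cases hF : q ∈ Aut.F
      · rw [if_pos hF] at hsat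
        exact ⟨q, hF, by simpa using hsat⟩
      · rw [if_neg hF] at hsat
        exact absurd hsat (by simp)
    · rintro ⟨q, hF, hq⟩
      refine ⟨_, List.mem_map.2 ⟨q, mem_qList Aut q, rfl⟩, ?_⟩
      rw [if_pos hF]
      simpa using hq

end Converse

section Converse2

open S1S

attribute [local instance] Automaton.fin

variable {m : ℕ} (Aut : Automaton (Fin m → Bool))

lemma notMem_lList_lt {X : ℕ} (hX : X < m) : X ∉ lList Aut := by
  simp only [lList, List.mem_map, List.mem_range]
  rintro ⟨j, _, rfl⟩
  omega

lemma phiA_sat (v : ℕ → ℕ) (B : ℕ → Set ℕ) :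
    (phiA Aut).Sat v B ↔
      Aut.CoBuchiAccepts (fun i (X : Fin m) => decide ((i : ℕ) ∈ B (X : ℕ))) := by
  rw [phiA, S1S.sat_foldr_exSO]
  constructor
  · rintro ⟨C, hC, hsat⟩
    rw [sat_psiA] at hsat
    obtain ⟨h1, h2, h3, h4, h5, h6, h7, h8, h9⟩ := hsat
    have hCB : ∀ j : Fin m, C (j : ℕ) = B (j : ℕ) :=
      fun j => hC _ (notMem_lList_lt Aut j.isLt)
    choose ρ hρ using h4
    have huniq : ∀ b q, b ∈ C (Yi Aut q) → ρ b = q :=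
      fun b q h => h5 b _ q (hρ b) h
    obtain ⟨b0, hb0⟩ := h1
    have hb00 : b0 = 0 := by
      cases b0 with
      | zero => rfl
      | succ c => exact absurd hb0 (h2 c)
    subst hb00
    refine ⟨ρ, ⟨huniq 0 _ (h3 0 hb0), fun i => ?_⟩, ?_⟩
    · obtain ⟨q, a, q', hΔ, hq, hlet, hq'⟩ := h6 i
      have hw : (fun X : Fin m => decide ((i : ℕ) ∈ B (X : ℕ))) = a := by
        funext j
        rw [← hCB j]
        by_cases haj : a j = true
        · rw [haj]
          exact decide_eq_true ((hlet j).2 haj)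
        · rw [decide_eq_false (fun hc => haj ((hlet j).1 hc))]
          exact (Bool.eq_false_iff.2 haj).symm
      beta_reduce
      rw [huniq i q hq, huniq (i+1) q' hq', hw]
      exact hΔ
    · obtain ⟨b1, hb1⟩ := h7
      have hW : ∀ c, b1 ≤ c → c ∈ C (Wi Aut) := by
        intro c hc
        induction c, hc using Nat.le_induction with
        | base => exact hb1
        | succ c hc ih => exact h8 c ih
      refine Set.Finite.subset (Set.finite_Iio b1) ?_
      intro i hi
      simp only [Set.mem_setOf_eq] at hi
      by_contra hlt
      simp only [Set.mem_Iio, not_lt] at hlt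
      obtain ⟨q, hqF, hqc⟩ := h9 i (hW i hlt)
      exact hi ((huniq i q hqc) ▸ hqF)
  · rintro ⟨ρ, ⟨hρ0, hρs⟩, hfin⟩
    obtain ⟨B0, hB0⟩ := hfin.bddAbove
    set n₀ : ℕ := B0 + 1 with hn₀
    have hFc : ∀ c, n₀ ≤ c → ρ c ∈ Aut.F := by
      intro c hc
      by_contra h
      exact absurd (hB0 h) (by omega)
    set C : ℕ → Set ℕ := fun X =>
      if X = Zi Aut then {0}
      else if X = Wi Aut then {i | n₀ ≤ i}
      else if m ≤ X ∧ X < m + nQ Aut then {i | (eQ Aut (ρ i) : ℕ) = X - m}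
      else B X with hCdef
    have hZ : C (Zi Aut) = {0} := if_pos rfl
    have hWd : C (Wi Aut) = {i | n₀ ≤ i} := by
      have h1 : Wi Aut ≠ Zi Aut := by simp only [Zi, Wi]; omega
      simp only [hCdef, if_neg h1, eq_self_iff_true, if_true]
    have hY : ∀ (q : Aut.Q) (i : ℕ), i ∈ C (Yi Aut q) ↔ ρ i = q := by
      intro q i
      have he : (eQ Aut q : ℕ) < nQ Aut := (eQ Aut q).isLt
      have h1 : Yi Aut q ≠ Zi Aut := by simp only [Yi, Zi]; omega
      have h2 : Yi Aut q ≠ Wi Aut := by simp only [Yi, Wi]; omega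
      have h3 : m ≤ Yi Aut q ∧ Yi Aut q < m + nQ Aut := by simp only [Yi]; omega
      simp only [hCdef, if_neg h1, if_neg h2, if_pos h3, Set.mem_setOf_eq]
      have : Yi Aut q - m = (eQ Aut q : ℕ) := by simp only [Yi]; omega
      rw [this]
      constructor
      · intro h
        exact (eQ Aut).injective (Fin.val_injective h)
      · intro h
        rw [h]
    have hCB : ∀ j : Fin m, C (j : ℕ) = B (j : ℕ) := by
      intro j
      have hj := j.isLt
      simp only [hCdef]
      rw [if_neg (show ((j:ℕ) : ℕ) ≠ Zi Aut by simp only [Zi]; omega),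
        if_neg (show ((j:ℕ) : ℕ) ≠ Wi Aut by simp only [Wi]; omega),
        if_neg (by omega)]
    refine ⟨C, ?_, ?_⟩
    · intro X hX
      have hX' : X < m ∨ m + nQ Aut + 2 ≤ X := by
        by_contra h
        push_neg at h
        exact hX (by
          simp only [lList, List.mem_map, List.mem_range]
          exact ⟨X - m, by omega, by omega⟩)
      simp only [hCdef]
      rw [if_neg (show X ≠ Zi Aut by simp only [Zi]; omega),
        if_neg (show X ≠ Wi Aut by simp only [Wi]; omega),
        if_neg (by omega)]
    · rw [sat_psiA]
      refine ⟨⟨0, by rw [hZ]; rfl⟩, ?_, ?_, ?_, ?_, ?_, ⟨n₀, by rw [hWd]; exact Set.mem_setOf.2 (le_refl _)⟩, ?_, ?_⟩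
      · intro b hb
        rw [hZ] at hb
        simp at hb
      · intro b hb
        rw [hZ] at hb
        simp only [Set.mem_singleton_iff] at hb
        subst hb
        exact (hY Aut.q0 0).2 hρ0
      · intro b
        exact ⟨ρ b, (hY (ρ b) b).2 rfl⟩
      · intro b q q' hq hq'
        rw [hY] at hq hq'
        rw [← hq, hq']
      · intro b
        refine ⟨ρ b, fun j : Fin m => decide ((b : ℕ) ∈ B (j : ℕ)), ρ (b + 1),
          hρs b, (hY (ρ b) b).2 rfl, ?_, (hY (ρ (b+1)) (b+1)).2 rfl⟩
        intro j
        rw [hCB j]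
        simp
      · intro b hb
        rw [hWd] at hb ⊢
        simp only [Set.mem_setOf_eq] at hb ⊢
        omega
      · intro b hb
        rw [hWd] at hb
        exact ⟨ρ b, hFc b hb, (hY (ρ b) b).2 rfl⟩

theorem coBuchi_to_exS1S {L : Set (ℕ → Fin m → Bool)} :
    CoBuchiRecognisable L → ExS1SDefinable m L := by
  rintro ⟨Aut, rfl⟩
  refine ⟨phiA Aut, exFrag_phiA Aut, ?_, ?_⟩
  · intro v v' A A' hAA'
    rw [phiA_sat, phiA_sat]
    have : (fun i (X : Fin m) => decide ((i : ℕ) ∈ A (X : ℕ)))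
        = (fun i (X : Fin m) => decide ((i : ℕ) ∈ A' (X : ℕ))) := by
      funext i X
      rw [hAA' (X : ℕ) X.isLt]
    rw [this]
  · ext α
    simp only [Set.mem_setOf_eq]
    rw [phiA_sat]
    have : (fun i (X : Fin m) => decide ((i : ℕ) ∈ setsOf m α (X : ℕ))) = α := by
      funext i X
      by_cases hα : α i X = true
      · simp [setsOf, hα, X.isLt]
      · simp only [Bool.not_eq_true] at hα
        simp [setsOf, hα]
    rw [this]

end Converse2


/-- The existential fragment of S1S over `(∈, s)` captures exactly the co-Büchi languages. -/
theorem exS1S_iff_coBuchi (m : ℕ) (L : Set (ℕ → (Fin m → Bool))) :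
    ExS1SDefinable m L ↔ CoBuchiRecognisable L := by
  exact ⟨exS1S_to_coBuchi, coBuchi_to_exS1S⟩
end

section
/- The existential fragment of S1S over (∈, s) is strictly less expressive than full S1S over (∈, s): there is a language (e.g., the set of characteristic words of infinite subsets of ℕ) definable in S1S over (∈, s) but not definable by any existential S1S formula over (∈, s). -/
/-!
Infinity of `X₀` is expressed by `∀ x, ∃ y ≥ x, y ∈ X₀`, with `≤` defined by second-order
induction.

Conversely, strip the existential block of a formula, leaving a first-order matrix `ψ` with set
variables among `X₀, …, X_N` and offsets at most `K`. Since every atom `x + k ∈ X` mentions a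
single first-order variable, the truth of `ψ` depends only on the set of realised window types
(the memberships of `n, …, n + K` in `X₀, …, X_N`). Take the word of the powers of two and an
assignment witnessing `ψ`. Every realised window type already occurs below some `M`; in a gap of
the powers of two beyond `M`, the pigeonhole principle gives positions `n₀` and `n₀ + d` with
`d > K` and the same window type. Folding `[n₀, ∞)` periodically onto `[n₀, n₀ + d)` keeps the set
of realised window types, so `ψ` still holds, while `X₀` has become finite.
-/

namespace S1S

/-- `x₀ ≤ x₁`, read as: every set containing `x₀` and closed under successor contains `x₁`. -/
def leFormula : S1S :=
  .not (.exSO 1 (.and (.atom 0 0 1)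
    (.and (.not (.exFO 2 (.and (.atom 0 2 1) (.not (.atom 1 2 1)))))
      (.not (.atom 0 1 1)))))

/-- `∀ x₀, ∃ x₁, x₀ ≤ x₁ ∧ x₁ ∈ X₀`. -/
def infiniteFormula : S1S :=
  .not (.exFO 0 (.not (.exFO 1 (.and leFormula (.atom 0 1 0)))))

theorem sat_leFormula (v : ℕ → ℕ) (A : ℕ → Set ℕ) : leFormula.Sat v A ↔ v 0 ≤ v 1 := by
  simp only [leFormula, Sat, Function.update_self, Nat.add_zero, not_exists, not_and, not_not]
  constructor
  · intro h
    exact h (Set.Ici (v 0)) Set.self_mem_Ici fun x hx => Nat.le_succ_of_le hx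
  · intro hle B hmem hclosed
    exact Nat.le_induction hmem (fun n _ ih => hclosed n ih) (v 1) hle

theorem sat_infiniteFormula (v : ℕ → ℕ) (A : ℕ → Set ℕ) :
    infiniteFormula.Sat v A ↔ (A 0).Infinite := by
  rw [← Set.ofPred_mem_eq (s := A 0), ← Nat.frequently_atTop_iff_infinite,
    Filter.frequently_atTop]
  simp [infiniteFormula, Sat, sat_leFormula]

def maxSetVar : S1S → ℕ
  | atom _ _ X => X
  | .not φ => φ.maxSetVar
  | .and φ ψ => max φ.maxSetVar ψ.maxSetVar
  | exFO _ φ => φ.maxSetVar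
  | exSO X φ => max X φ.maxSetVar

def maxOffset : S1S → ℕ
  | atom k _ _ => k
  | .not φ => φ.maxOffset
  | .and φ ψ => max φ.maxOffset ψ.maxOffset
  | exFO _ φ => φ.maxOffset
  | exSO _ φ => φ.maxOffset

theorem ExFrag.exists_firstOrder {φ : S1S} (h : φ.ExFrag) :
    ∃ ψ : S1S, ∃ S : Set ℕ, ψ.FirstOrder ∧
      ∀ v A, φ.Sat v A ↔ ∃ A' : ℕ → Set ℕ, (∀ X ∉ S, A' X = A X) ∧ ψ.Sat v A' := by
  induction h with
  | @fo φ hφ => exact ⟨φ, ∅, hφ, fun v A => ⟨fun h => ⟨A, fun _ _ => rfl, h⟩,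
      fun ⟨A', hA', h⟩ => (funext fun X => hA' X (Set.notMem_empty X)) ▸ h⟩⟩
  | @ex φ X _ ih =>
    obtain ⟨ψ, S, hψ, hsat⟩ := ih
    refine ⟨ψ, insert X S, hψ, fun v A => ?_⟩
    simp only [Sat, hsat]
    constructor
    · rintro ⟨B, A', hA', h⟩
      refine ⟨A', fun Y hY => ?_, h⟩
      rw [Set.mem_insert_iff, not_or] at hY
      rw [hA' Y hY.2, Function.update_of_ne hY.1]
    · rintro ⟨A', hA', h⟩
      refine ⟨A' X, A', fun Y hY => ?_, h⟩
      by_cases hYX : Y = X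
      · rw [hYX, Function.update_self]
      · rw [Function.update_of_ne hYX, hA' Y (by simp [hYX, hY])]

end S1S

def window (N K : ℕ) (A : ℕ → Set ℕ) (n : ℕ) : Fin (N + 1) → Fin (K + 1) → Prop :=
  fun X k => n + k ∈ A X

theorem mem_iff_of_window_eq {N K : ℕ} {A A' : ℕ → Set ℕ} {n n' : ℕ}
    (h : window N K A n = window N K A' n') {X k : ℕ} (hX : X ≤ N) (hk : k ≤ K) :
    n + k ∈ A X ↔ n' + k ∈ A' X :=
  iff_of_eq (congrFun (congrFun h ⟨X, by omega⟩) ⟨k, by omega⟩)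

theorem S1S.FirstOrder.sat_iff_of_window {ψ : S1S} (hψ : ψ.FirstOrder) {N K : ℕ}
    (hN : ψ.maxSetVar ≤ N) (hK : ψ.maxOffset ≤ K) {A A' : ℕ → Set ℕ}
    (hrange : Set.range (window N K A) = Set.range (window N K A')) {v v' : ℕ → ℕ}
    (hv : ∀ x, window N K A (v x) = window N K A' (v' x)) :
    ψ.Sat v A ↔ ψ.Sat v' A' := by
  induction ψ generalizing v v' with
  | atom k x X => exact mem_iff_of_window_eq (hv x) hN hK
  | not φ ih => exact (ih hψ hN hK hv).not
  | and φ χ ihφ ihχ =>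
    exact and_congr (ihφ hψ.1 (le_of_max_le_left hN) (le_of_max_le_left hK) hv)
      (ihχ hψ.2 (le_of_max_le_right hN) (le_of_max_le_right hK) hv)
  | exFO x φ ih =>
    have hupdate : ∀ b b', window N K A b = window N K A' b' →
        ∀ y, window N K A (Function.update v x b y) =
          window N K A' (Function.update v' x b' y) := by
      intro b b' hb y
      by_cases hy : y = x
      · subst hy; simpa only [Function.update_self] using hb
      · simpa only [Function.update_of_ne hy] using hv y
    constructor
    · rintro ⟨b, hb⟩
      obtain ⟨b', hb'⟩ : window N K A b ∈ Set.range (window N K A') := hrange ▸ ⟨b, rfl⟩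
      exact ⟨b', (ih hψ hN hK (hupdate b b' hb'.symm)).mp hb⟩
    · rintro ⟨b', hb'⟩
      obtain ⟨b, hb⟩ : window N K A' b' ∈ Set.range (window N K A) := hrange ▸ ⟨b', rfl⟩
      exact ⟨b, (ih hψ hN hK (hupdate b b' hb)).mpr hb'⟩
  | exSO _ _ => exact hψ.elim

def periodicFold (n₀ d p : ℕ) : ℕ := if p < n₀ then p else n₀ + (p - n₀) % d

theorem periodicFold_of_lt {n₀ d p : ℕ} (hp : p < n₀) : periodicFold n₀ d p = p := if_pos hp

theorem periodicFold_mem_Ico {n₀ d p : ℕ} (hd : 0 < d) (hp : n₀ ≤ p) :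
    periodicFold n₀ d p ∈ Set.Ico n₀ (n₀ + d) := by
  rw [periodicFold, if_neg (not_lt.mpr hp)]
  exact ⟨Nat.le_add_right _ _, Nat.add_lt_add_left (Nat.mod_lt _ hd) _⟩

theorem periodicFold_add {n₀ d K p k : ℕ} (hKd : K < d) (hk : k ≤ K) :
    periodicFold n₀ d (p + k) = periodicFold n₀ d p + k ∨
      ∃ j ≤ K, periodicFold n₀ d (p + k) = n₀ + j ∧ periodicFold n₀ d p + k = n₀ + d + j := by
  unfold periodicFold
  by_cases hpk : p + k < n₀
  · left; rw [if_pos hpk, if_pos (by omega)]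
  by_cases hp : p < n₀
  · left; rw [if_neg hpk, if_pos hp, Nat.mod_eq_of_lt (by omega)]; omega
  rw [if_neg hpk, if_neg hp, show p + k - n₀ = (p - n₀) + k by omega, Nat.add_mod,
    Nat.mod_eq_of_lt (show k < d by omega)]
  have hr := Nat.mod_lt (p - n₀) (show 0 < d by omega)
  by_cases hrk : (p - n₀) % d + k < d
  · left; rw [Nat.mod_eq_of_lt hrk]; omega
  · right
    refine ⟨(p - n₀) % d + k - d, by omega, ?_, by omega⟩
    rw [Nat.mod_eq_sub_mod (by omega), Nat.mod_eq_of_lt (by omega)]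

theorem window_preimage_periodicFold {N K n₀ d : ℕ} {A : ℕ → Set ℕ} (hKd : K < d)
    (hper : window N K A n₀ = window N K A (n₀ + d)) (p : ℕ) :
    window N K (fun X => periodicFold n₀ d ⁻¹' A X) p = window N K A (periodicFold n₀ d p) := by
  ext X k
  change periodicFold n₀ d (p + k) ∈ A X ↔ periodicFold n₀ d p + k ∈ A X
  rcases periodicFold_add (p := p) hKd k.is_le with h | ⟨j, hj, h, h'⟩
  · rw [h]
  · rw [h, h']; exact mem_iff_of_window_eq hper X.is_le hj

theorem exists_le_apply_eq {β : Type*} [Finite β] (τ : ℕ → β) :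
    ∃ M, ∀ n, ∃ m ≤ M, τ m = τ n := by
  obtain ⟨M, hM⟩ := (Set.finite_range (Set.rangeSplitting τ)).bddAbove
  exact ⟨M, fun n => ⟨_, hM ⟨⟨τ n, n, rfl⟩, rfl⟩, Set.apply_rangeSplitting τ ⟨τ n, n, rfl⟩⟩⟩

theorem exists_spaced_apply_eq {β : Type*} [Finite β] (τ : ℕ → β) (s K : ℕ) :
    ∃ n₀ d, s ≤ n₀ ∧ K < d ∧ n₀ + d ≤ s + Nat.card β * (K + 1) ∧ τ n₀ = τ (n₀ + d) := by
  have := Fintype.ofFinite β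
  have hcard : Fintype.card β < Fintype.card (Fin (Nat.card β + 1)) := by
    simp [Nat.card_eq_fintype_card]
  have key : ∀ a b : Fin (Nat.card β + 1), a < b → τ (s + a * (K + 1)) = τ (s + b * (K + 1)) →
      ∃ n₀ d, s ≤ n₀ ∧ K < d ∧ n₀ + d ≤ s + Nat.card β * (K + 1) ∧ τ n₀ = τ (n₀ + d) := by
    intro a b hab h
    have hb : s + a * (K + 1) + (b - a) * (K + 1) = s + b * (K + 1) := by
      rw [add_assoc, ← add_mul, Nat.add_sub_cancel' (Fin.le_def.mp hab.le)]
    refine ⟨s + a * (K + 1), (b - a) * (K + 1), by omega, ?_, ?_, by rwa [hb]⟩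
    · nlinarith [Nat.sub_pos_of_lt (Fin.lt_def.mp hab)]
    · rw [hb]
      exact Nat.add_le_add_left (Nat.mul_le_mul_right _ (Nat.lt_succ_iff.mp b.is_lt)) s
  obtain ⟨a, b, hne, h⟩ := Fintype.exists_ne_map_eq_of_card_lt
    (fun i : Fin (Nat.card β + 1) => τ (s + i * (K + 1))) hcard
  rcases hne.lt_or_gt with hab | hba
  · exact key a b hab h
  · exact key b a hba h.symm

theorem S1S.FirstOrder.exists_finite_preimage_sat {ψ : S1S} (hψ : ψ.FirstOrder)
    {A : ℕ → Set ℕ} {Y : ℕ} (hgaps : ∀ M G, ∃ s, M < s ∧ ∀ p, s ≤ p → p ≤ s + G → p ∉ A Y)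
    (hsat : ψ.Sat (fun _ => 0) A) :
    ∃ f : ℕ → ℕ, (f ⁻¹' A Y).Finite ∧ ψ.Sat (fun _ => 0) (fun X => f ⁻¹' A X) := by
  set τ := window ψ.maxSetVar ψ.maxOffset A
  obtain ⟨M, hM⟩ := exists_le_apply_eq τ
  obtain ⟨s, hMs, hgap⟩ := hgaps (M + ψ.maxOffset)
    (Nat.card (Fin (ψ.maxSetVar + 1) → Fin (ψ.maxOffset + 1) → Prop) * (ψ.maxOffset + 1))
  obtain ⟨n₀, d, hs, hKd, hd, hper⟩ := exists_spaced_apply_eq τ s ψ.maxOffset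
  have hwin := window_preimage_periodicFold hKd hper
  refine ⟨periodicFold n₀ d, (Set.finite_Iio n₀).subset fun p hp => ?_,
    (hψ.sat_iff_of_window le_rfl le_rfl ?_ fun _ => ?_).mp hsat⟩
  · by_contra hpn
    obtain ⟨h₁, h₂⟩ := periodicFold_mem_Ico (Nat.zero_lt_of_lt hKd) (not_lt.mp hpn)
    exact hgap _ (by omega) (by omega) hp
  · ext t
    constructor
    · rintro ⟨n, rfl⟩
      obtain ⟨m, hm, hmn⟩ := hM n
      exact ⟨m, by rw [hwin, periodicFold_of_lt (by omega)]; exact hmn⟩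
    · rintro ⟨p, rfl⟩
      exact ⟨_, (hwin p).symm⟩
  · rw [hwin, periodicFold_of_lt (by omega)]

theorem exists_long_gap_range_two_pow (M G : ℕ) :
    ∃ s, M < s ∧ ∀ p, s ≤ p → p ≤ s + G → p ∉ Set.range (2 ^ · : ℕ → ℕ) := by
  obtain ⟨j, hj⟩ : ∃ j, M + G + 1 < 2 ^ j := ⟨_, Nat.lt_two_pow_self⟩
  refine ⟨2 ^ j + 1, by omega, ?_⟩
  rintro p hs hp ⟨m, rfl⟩
  dsimp only at hs hp
  have hjm : j < m := (Nat.pow_lt_pow_iff_right one_lt_two).mp (by omega)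
  have : 2 ^ (j + 1) ≤ 2 ^ m := Nat.pow_le_pow_right two_pos hjm
  omega

open Classical in
noncomputable def charWord (s : Set ℕ) : ℕ → Fin 1 → Bool := fun i _ => decide (i ∈ s)

theorem setOf_charWord (s : Set ℕ) : {i | charWord s i 0 = true} = s := by
  ext; simp [charWord]

theorem setsOf_one_zero (α : ℕ → Fin 1 → Bool) : setsOf 1 α 0 = {i | α i 0 = true} := by
  ext; simp [setsOf]

theorem setsOf_one_of_ne_zero (α : ℕ → Fin 1 → Bool) {X : ℕ} (hX : X ≠ 0) :
    setsOf 1 α X = ∅ := by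
  ext; simp [setsOf]; omega

theorem not_exS1SDefinable_infinite :
    ¬ ExS1SDefinable 1 {α : ℕ → (Fin 1 → Bool) | {i | α i 0 = true}.Infinite} := by
  rintro ⟨φ, hφ, -, hL⟩
  obtain ⟨ψ, S, hψ, hsat⟩ := hφ.exists_firstOrder
  have infinite_iff : ∀ s : Set ℕ, s.Infinite ↔
      ∃ A, (∀ X ∉ S, A X = setsOf 1 (charWord s) X) ∧ ψ.Sat (fun _ => 0) A := fun s => by
    have h := Set.ext_iff.mp hL (charWord s)
    rwa [Set.mem_ofPred_eq, Set.mem_ofPred_eq, setOf_charWord, hsat] at h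
  obtain ⟨A, hA, hψA⟩ := (infinite_iff _).mp
    (Set.infinite_range_of_injective (Nat.pow_right_injective le_rfl))
  -- If `X₀` is among the quantified variables, `φ` does not see the word at all.
  by_cases h0 : 0 ∈ S
  · refine Set.finite_empty.not_infinite ((infinite_iff ∅).mpr ⟨A, fun X hX => ?_, hψA⟩)
    have hX0 : X ≠ 0 := fun h => hX (h ▸ h0)
    rw [hA X hX, setsOf_one_of_ne_zero _ hX0, setsOf_one_of_ne_zero _ hX0]
  · have hgaps := exists_long_gap_range_two_pow
    rw [← setOf_charWord (Set.range _), ← setsOf_one_zero, ← hA 0 h0] at hgaps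
    obtain ⟨f, hfin, hψf⟩ := hψ.exists_finite_preimage_sat hgaps hψA
    refine hfin.not_infinite ((infinite_iff _).mpr ⟨_, fun X hX => ?_, hψf⟩)
    rcases eq_or_ne X 0 with rfl | hX0
    · rw [setsOf_one_zero, setOf_charWord]
    · rw [hA X hX, setsOf_one_of_ne_zero _ hX0, setsOf_one_of_ne_zero _ hX0, Set.preimage_empty]

/-- The existential fragment of S1S over `(∈, s)` is strictly less expressive than full
S1S over `(∈, s)`: the set of characteristic words of infinite subsets of ℕ is definable
in full S1S but not in the existential fragment. -/
theorem exS1S_strictly_weaker :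
    S1SDefinable 1 {α : ℕ → (Fin 1 → Bool) | {i | α i 0 = true}.Infinite} ∧
    ¬ ExS1SDefinable 1 {α : ℕ → (Fin 1 → Bool) | {i | α i 0 = true}.Infinite} := by
  refine ⟨⟨S1S.infiniteFormula, fun v v' A A' hA => ?_, ?_⟩, not_exS1SDefinable_infinite⟩
  · rw [S1S.sat_infiniteFormula, S1S.sat_infiniteFormula, hA 0 one_pos]
  · ext α
    rw [Set.mem_ofPred_eq, Set.mem_ofPred_eq, S1S.sat_infiniteFormula, setsOf_one_zero]
end
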